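/- Let a < b be real numbers and let f : ℝ → ℝ. Suppose that every point t ∈ [a, b] has an open neighborhood U such that f is concave on U ∩ [a, b]. Then f is concave on [a, b]. -/

import Mathlib

/-!
By the Lebesgue number lemma there is `δ > 0` such that `f` is concave on every subinterval of
`[a, b]` of length at most `δ`, i.e. the three-chord inequality `slope f y z ≤ slope f x y` holds
for `x < y < z` with `z - x ≤ δ`. Given `x < y < w < z`, the inequalities for `(x, y, w)` and
`(y, w, z)` imply those for `(x, y, z)` and `(x, w, z)`; inserting points at distance `δ / 2`
therefore shrinks first the left gap `y - x` and then the right gap `z - y` until the triple is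
short.
-/

open Set

theorem concaveOn_iff_forall_mem_Icc {𝕜 E β : Type*} [Field 𝕜] [LinearOrder 𝕜]
    [IsStrictOrderedRing 𝕜] [AddCommMonoid E] [AddCommMonoid β] [PartialOrder β]
    [Module 𝕜 E] [Module 𝕜 β] {s : Set E} {f : E → β} (hs : Convex 𝕜 s) :
    ConcaveOn 𝕜 s f ↔ ∀ x ∈ s, ∀ y ∈ s, ∀ l ∈ Icc (0 : 𝕜) 1,
      l • f x + (1 - l) • f y ≤ f (l • x + (1 - l) • y) := by
  refine ⟨fun hf x hx y hy l hl => hf.2 hx hy hl.1 (sub_nonneg.2 hl.2) (add_sub_cancel _ _),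
    fun h => ⟨hs, fun x hx y hy a b ha hb hab => ?_⟩⟩
  obtain rfl : b = 1 - a := eq_sub_of_add_eq' hab
  exact h x hx y hy a ⟨ha, by linarith⟩

theorem forall_of_forall_le_of_forall_sub {α : Type*} [AddCommGroup α] [LinearOrder α]
    [IsOrderedAddMonoid α] [Archimedean α] {c : α} (hc : 0 < c) {Q : α → Prop}
    (base : ∀ t ≤ c, Q t) (step : ∀ t, c < t → Q (t - c) → Q t) : ∀ t, Q t := by
  suffices h : ∀ n : ℕ, ∀ t ≤ n • c, Q t from
    fun t => (Archimedean.arch t hc).elim fun n hn => h n t hn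
  intro n
  induction n with
  | zero => exact fun t ht => base t (ht.trans (by simpa using hc.le))
  | succ n ih =>
    intro t ht
    rcases le_or_gt t c with htc | htc
    · exact base t htc
    · exact step t htc (ih _ (by rw [succ_nsmul] at ht; exact sub_le_iff_le_add.2 ht))

section SlopeChain

variable {f : ℝ → ℝ} {x y z w : ℝ}

-- `slope f x z` is a weighted average of `slope f x y` and `slope f y z`, and similarly for `w`.
theorem slope_anti_adjacent_erase_second (hxy : x < y) (hyz : y < z) (hzw : z < w)
    (h₁ : slope f y z ≤ slope f x y) (h₂ : slope f z w ≤ slope f y z) :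
    slope f z w ≤ slope f x z := by
  simp only [slope_def_field] at *
  rw [div_le_div_iff₀ (by linarith) (by linarith)] at *
  nlinarith

theorem slope_anti_adjacent_erase_third (hxy : x < y) (hyz : y < z) (hzw : z < w)
    (h₁ : slope f y z ≤ slope f x y) (h₂ : slope f z w ≤ slope f y z) :
    slope f y w ≤ slope f x y := by
  simp only [slope_def_field] at *
  rw [div_le_div_iff₀ (by linarith) (by linarith)] at *
  nlinarith

end SlopeChain

section LocalToGlobal

variable {s : Set ℝ} {f : ℝ → ℝ} {δ : ℝ}

theorem slope_anti_adjacent_of_local_of_sub_le_half (hs : s.OrdConnected) (hδ : 0 < δ)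
    (hloc : ∀ ⦃x y z⦄, x ∈ s → z ∈ s → x < y → y < z → z - x ≤ δ →
      slope f y z ≤ slope f x y)
    {x y z : ℝ} (hx : x ∈ s) (hz : z ∈ s) (hxy : x < y) (hyz : y < z) (hzy : z - y ≤ δ / 2) :
    slope f y z ≤ slope f x y := by
  suffices h : ∀ t, ∀ ⦃x y z⦄, x ∈ s → z ∈ s → x < y → y < z → z - y ≤ δ / 2 → y - x = t →
      slope f y z ≤ slope f x y from h _ hx hz hxy hyz hzy rfl
  refine forall_of_forall_le_of_forall_sub (half_pos hδ)
    (fun t ht x y z hx hz hxy hyz hzy hyx => hloc hx hz hxy hyz (by linarith))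
    (fun t ht ih x y z hx hz hxy hyz hzy hyx => ?_)
  have hm : y - δ / 2 ∈ s := hs.out hx hz ⟨by linarith, by linarith⟩
  have hy : y ∈ s := hs.out hx hz ⟨hxy.le, hyz.le⟩
  exact slope_anti_adjacent_erase_second (by linarith) (by linarith) hyz
    (ih hx hy (by linarith) (by linarith) (by linarith) (by linarith))
    (hloc hm hz (by linarith) hyz (by linarith))

theorem slope_anti_adjacent_of_local (hs : s.OrdConnected) (hδ : 0 < δ)
    (hloc : ∀ ⦃x y z⦄, x ∈ s → z ∈ s → x < y → y < z → z - x ≤ δ →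
      slope f y z ≤ slope f x y)
    {x y z : ℝ} (hx : x ∈ s) (hz : z ∈ s) (hxy : x < y) (hyz : y < z) :
    slope f y z ≤ slope f x y := by
  suffices h : ∀ t, ∀ ⦃x y z⦄, x ∈ s → z ∈ s → x < y → y < z → z - y = t →
      slope f y z ≤ slope f x y from h _ hx hz hxy hyz rfl
  refine forall_of_forall_le_of_forall_sub (half_pos hδ)
    (fun t ht x y z hx hz hxy hyz hzy =>
      slope_anti_adjacent_of_local_of_sub_le_half hs hδ hloc hx hz hxy hyz (by linarith))
    (fun t ht ih x y z hx hz hxy hyz hzy => ?_)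
  have hm : y + δ / 2 ∈ s := hs.out hx hz ⟨by linarith, by linarith⟩
  have hy : y ∈ s := hs.out hx hz ⟨hxy.le, hyz.le⟩
  exact slope_anti_adjacent_erase_third hxy (by linarith) (by linarith)
    (slope_anti_adjacent_of_local_of_sub_le_half hs hδ hloc hx hm hxy (by linarith) (by linarith))
    (ih hy hz (by linarith) (by linarith) (by linarith))

theorem concaveOn_of_concaveOn_Icc_of_sub_le (hs : Convex ℝ s) (hδ : 0 < δ)
    (h : ∀ x ∈ s, ∀ y ∈ s, y - x ≤ δ → ConcaveOn ℝ (Icc x y) f) : ConcaveOn ℝ s f := by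
  have hloc : ∀ ⦃x y z⦄, x ∈ s → z ∈ s → x < y → y < z → z - x ≤ δ →
      slope f y z ≤ slope f x y := fun x y z hx hz hxy hyz hzx => by
    simpa only [slope_def_field] using (h x hx z hz hzx).slope_anti_adjacent
      (left_mem_Icc.2 (hxy.trans hyz).le) (right_mem_Icc.2 (hxy.trans hyz).le) hxy hyz
  refine concaveOn_of_slope_anti_adjacent hs fun hx hz hxy hyz => ?_
  simpa only [slope_def_field] using
    slope_anti_adjacent_of_local hs.ordConnected hδ hloc hx hz hxy hyz

end LocalToGlobal

theorem concaveOn_of_locally_concaveOn_general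
    (a b : ℝ) (f : ℝ → ℝ)
    (hloc : ∀ t ∈ Set.Icc a b, ∃ U : Set ℝ, IsOpen U ∧ t ∈ U ∧
      ∀ x ∈ U ∩ Set.Icc a b, ∀ y ∈ U ∩ Set.Icc a b, ∀ l ∈ Set.Icc (0:ℝ) 1,
        l * f x + (1 - l) * f y ≤ f (l * x + (1 - l) * y)) :
    ∀ x ∈ Set.Icc a b, ∀ y ∈ Set.Icc a b, ∀ l ∈ Set.Icc (0:ℝ) 1,
      l * f x + (1 - l) * f y ≤ f (l * x + (1 - l) * y) := by
  choose U hUo hUt hUf using hloc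
  obtain ⟨δ, hδ, hball⟩ := lebesgue_number_lemma_of_metric isCompact_Icc
    (c := fun t : Icc a b => U t t.2) (fun t => hUo t t.2)
    (fun t ht => mem_iUnion.2 ⟨⟨t, ht⟩, hUt t ht⟩)
  have hshort : ∀ x ∈ Icc a b, ∀ y ∈ Icc a b, y - x ≤ δ / 2 → ConcaveOn ℝ (Icc x y) f := by
    intro x hx y hy hxy
    obtain ⟨⟨t, ht⟩, hsub⟩ := hball x hx
    have hxyU : Icc x y ⊆ U t ht ∩ Icc a b := fun z hz =>
      ⟨hsub (by rw [Metric.mem_ball, Real.dist_eq, abs_lt]; constructor <;> linarith [hz.1, hz.2]),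
        Icc_subset_Icc hx.1 hy.2 hz⟩
    refine (concaveOn_iff_forall_mem_Icc (convex_Icc x y)).2 fun u hu v hv l hl => ?_
    simpa only [smul_eq_mul] using hUf t ht u (hxyU hu) v (hxyU hv) l hl
  simpa only [smul_eq_mul] using (concaveOn_iff_forall_mem_Icc (convex_Icc a b)).1
    (concaveOn_of_concaveOn_Icc_of_sub_le (convex_Icc a b) (half_pos hδ) hshort)

/-- If every point of `[a, b]` has an open neighborhood on which `f` is concave
(relative to `[a, b]`), then `f` is concave on `[a, b]`. -/
theorem concaveOn_of_locally_concaveOn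
    (a b : ℝ) (hab : a < b) (f : ℝ → ℝ)
    (hloc : ∀ t ∈ Set.Icc a b, ∃ U : Set ℝ, IsOpen U ∧ t ∈ U ∧
      ∀ x ∈ U ∩ Set.Icc a b, ∀ y ∈ U ∩ Set.Icc a b, ∀ l ∈ Set.Icc (0:ℝ) 1,
        l * f x + (1 - l) * f y ≤ f (l * x + (1 - l) * y)) :
    ∀ x ∈ Set.Icc a b, ∀ y ∈ Set.Icc a b, ∀ l ∈ Set.Icc (0:ℝ) 1,
      l * f x + (1 - l) * f y ≤ f (l * x + (1 - l) * y) :=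
  concaveOn_of_locally_concaveOn_general a b f hloc
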